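/- arXiv:2405.14648 — 7 statements merged into one kernel-verified Lean document; each statement's English description precedes it below -/
import Mathlib

section
/- Let S be an affine semigroup and P ⊆ S. Then P is an ideal of S (P + S ⊆ P) if and only if P = X + S for some S-incomparable subset X of S. Moreover, if X₁ and X₂ are distinct S-incomparable subsets of S, then X₁ + S ≠ X₂ + S. -/
open Pointwise

/-- `S` is an affine semigroup: a finitely generated additive submonoid of `ℕ^p`
(containing `0`). -/
def IsAffine {p : ℕ} (S : Set (Fin p → ℕ)) : Prop :=
  ∃ F : Finset (Fin p → ℕ),
    S = (AddSubmonoid.closure (F : Set (Fin p → ℕ)) : Set (Fin p → ℕ))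

/-- The set of integer points of the rational cone generated by `S`:
`x` is a non-negative rational combination of elements of `S` iff some positive
multiple of `x` lies in the additive monoid generated by `S`. -/
def coneOf {p : ℕ} (S : Set (Fin p → ℕ)) : Set (Fin p → ℕ) :=
  {x | ∃ n : ℕ, 0 < n ∧ n • x ∈ AddSubmonoid.closure S}

/-- A `𝒞`-semigroup: an affine semigroup with finite complement in its cone. -/
def CSemigroup {p : ℕ} (S : Set (Fin p → ℕ)) : Prop :=
  IsAffine S ∧ (coneOf S \ S).Finite

/-- `P` is an ideal of `S`: `P ⊆ S` and `P + S ⊆ P`. -/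
def IsIdealOf {p : ℕ} (S P : Set (Fin p → ℕ)) : Prop :=
  P ⊆ S ∧ P + S ⊆ P

/-- `x ≤_S y` iff `y - x ∈ S`. -/
def leS {p : ℕ} (S : Set (Fin p → ℕ)) (x y : Fin p → ℕ) : Prop :=
  ∃ s ∈ S, x + s = y

/-- A non-empty subset `X ⊆ S` is `S`-incomparable if `x - x' ∉ S` for all
distinct `x, x' ∈ X`. -/
def SIncomparable {p : ℕ} (S X : Set (Fin p → ℕ)) : Prop :=
  X.Nonempty ∧ X ⊆ S ∧ ∀ x ∈ X, ∀ x' ∈ X, x ≠ x' → ¬ leS S x' x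

/-- The minimal generating set of `T`: non-zero elements of `T` that are not a
sum of two non-zero elements of `T`. -/
def msg {p : ℕ} (T : Set (Fin p → ℕ)) : Set (Fin p → ℕ) :=
  {x ∈ T | x ≠ 0 ∧ ¬ ∃ a ∈ T, ∃ b ∈ T, a ≠ 0 ∧ b ≠ 0 ∧ x = a + b}

/-- The Apery set `Ap(S, m) = {s ∈ S : s - m ∉ S}`. -/
def Ap {p : ℕ} (S : Set (Fin p → ℕ)) (m : Fin p → ℕ) : Set (Fin p → ℕ) :=
  {s ∈ S | ¬ ∃ u ∈ S, m + u = s}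

/-- `τ` is an extremal ray of the cone `C`: the set of points of `C` lying on the
ray spanned by some non-zero `v ∈ C`, such that whenever a sum of two elements of
`C` lies in `τ`, both summands lie in `τ`. -/
def IsExtremalRay {p : ℕ} (C τ : Set (Fin p → ℕ)) : Prop :=
  (∃ v : Fin p → ℕ, v ≠ 0 ∧ v ∈ C ∧
    τ = {x ∈ C | ∃ a b : ℕ, 0 < b ∧ b • x = a • v}) ∧
  ∀ x ∈ C, ∀ y ∈ C, x + y ∈ τ → x ∈ τ ∧ y ∈ τ

/-- `τ 1, …, τ t` are (exactly) the extremal rays of the cone `C`. -/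
def RaysOf {p t : ℕ} (C : Set (Fin p → ℕ)) (τ : Fin t → Set (Fin p → ℕ)) : Prop :=
  (∀ i, IsExtremalRay C (τ i)) ∧ Function.Injective τ ∧
    ∀ ρ, IsExtremalRay C ρ → ∃ i, ρ = τ i

/-- `m` is the `i`-multiplicity of `T` along the ray `τ`: the minimum non-zero
element of `τ ∩ T` for the componentwise order. -/
def MultOn {p : ℕ} (τ T : Set (Fin p → ℕ)) (m : Fin p → ℕ) : Prop :=
  m ∈ τ ∧ m ∈ T ∧ m ≠ 0 ∧ ∀ x ∈ τ ∩ T, x ≠ 0 → m ≤ x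

/-- `T` is an `I(S)`-semigroup: an affine semigroup such that `T \ {0}` is an
ideal of `S`. -/
def ISemigroupOf {p : ℕ} (S T : Set (Fin p → ℕ)) : Prop :=
  IsAffine T ∧ 0 ∈ T ∧ IsIdealOf S (T \ {0})

/-- `le` is a monomial order on `ℕ^p`: a total order compatible with addition in
which `0` is the least element. -/
def IsMonomialOrder {p : ℕ} (le : (Fin p → ℕ) → (Fin p → ℕ) → Prop) : Prop :=
  (∀ x, le x x) ∧ (∀ x y z, le x y → le y z → le x z) ∧
  (∀ x y, le x y → le y x → x = y) ∧ (∀ x y, le x y ∨ le y x) ∧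
  (∀ x y z, le x y → le (x + z) (y + z)) ∧ (∀ x, le 0 x)

/-- The pseudo-Frobenius elements of `T`. -/
def PF {p : ℕ} (T : Set (Fin p → ℕ)) : Set (Fin p → ℕ) :=
  {x ∈ coneOf T \ T | ∀ y ∈ T, y ≠ 0 → x + y ∈ T}

/-- `P ⊆ S` is an ideal of `S` iff `P = X + S` for some `S`-incomparable `X ⊆ S`;
moreover distinct `S`-incomparable sets give distinct ideals. -/
theorem statement1 {p : ℕ} (S : Set (Fin p → ℕ)) (hS : IsAffine S) :
    (∀ P : Set (Fin p → ℕ), P ⊆ S → P.Nonempty →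
      (P + S ⊆ P ↔ ∃ X : Set (Fin p → ℕ), SIncomparable S X ∧ P = X + S)) ∧
    (∀ X₁ X₂ : Set (Fin p → ℕ), SIncomparable S X₁ → SIncomparable S X₂ →
      X₁ ≠ X₂ → X₁ + S ≠ X₂ + S) := by
  obtain ⟨F, hF⟩ := hS
  have h0 : (0 : Fin p → ℕ) ∈ S := by
    rw [hF]; exact (AddSubmonoid.closure _).zero_mem
  have hadd : ∀ a ∈ S, ∀ b ∈ S, a + b ∈ S := by
    intro a ha b hb
    rw [hF] at ha hb ⊢
    exact (AddSubmonoid.closure _).add_mem ha hb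
  constructor
  · intro P hPS hPne
    constructor
    · intro hideal
      set X : Set (Fin p → ℕ) :=
        {x ∈ P | ∀ x' ∈ P, leS S x' x → x' = x} with hX
      have key : ∀ n, ∀ y ∈ P, (∑ i, y i) = n → y ∈ X + S := by
        intro n
        induction n using Nat.strong_induction_on with
        | _ n ih =>
          intro y hy hsum
          by_cases hyX : ∀ x' ∈ P, leS S x' y → x' = y
          · exact ⟨y, ⟨hy, hyX⟩, 0, h0, add_zero y⟩
          · push_neg at hyX
            obtain ⟨x', hx'P, ⟨s, hsS, hxs⟩, hne⟩ := hyX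
            have hs0 : s ≠ 0 := by
              intro h; apply hne; rw [h, add_zero] at hxs; exact hxs
            have hlt : (∑ i, x' i) < n := by
              have : (∑ i, x' i) + (∑ i, s i) = n := by
                rw [← hsum, ← hxs]; simp only [Pi.add_apply]
                exact Finset.sum_add_distrib.symm
              have hspos : 0 < ∑ i, s i := by
                rcases Function.ne_iff.mp hs0 with ⟨i, hi⟩
                exact Finset.sum_pos' (fun j _ => Nat.zero_le _)
                  ⟨i, Finset.mem_univ i, Nat.pos_of_ne_zero hi⟩
              omega
            obtain ⟨a, haX, b, hbS, hab⟩ := ih _ hlt x' hx'P rfl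
            exact ⟨a, haX, b + s, hadd b hbS s hsS, by rw [← hxs, ← hab, add_assoc]⟩
      refine ⟨X, ⟨?_, ?_, ?_⟩, ?_⟩
      · obtain ⟨y, hy⟩ := hPne
        obtain ⟨a, haX, _⟩ := key _ y hy rfl
        exact ⟨a, haX⟩
      · intro x hx; exact hPS hx.1
      · intro x hx x' hx' hne hle
        exact hne ((hx.2 x' hx'.1 hle)).symm
      · apply Set.Subset.antisymm
        · intro y hy
          exact key _ y hy rfl
        · intro y hy
          obtain ⟨a, haX, b, hbS, hab⟩ := hy
          exact hab ▸ hideal ⟨a, haX.1, b, hbS, rfl⟩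
    · rintro ⟨X, ⟨hXne, hXS, hXinc⟩, rfl⟩
      rintro y ⟨z, ⟨a, haX, b, hbS, rfl⟩, c, hcS, rfl⟩
      exact ⟨a, haX, b + c, hadd b hbS c hcS, (add_assoc a b c).symm⟩
  · intro X₁ X₂ h1 h2 hne heq
    apply hne
    have main : ∀ X₁ X₂ : Set (Fin p → ℕ), SIncomparable S X₁ → SIncomparable S X₂ →
        X₁ + S = X₂ + S → X₁ ⊆ X₂ := by
      intro Y₁ Y₂ g1 g2 geq x hx
      have hx1 : x ∈ Y₂ + S := geq ▸ ⟨x, hx, 0, h0, add_zero x⟩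
      obtain ⟨x₂, hx₂, s, hsS, hxs⟩ := hx1
      change x₂ + s = x at hxs
      have hx2 : x₂ ∈ Y₁ + S := geq ▸ ⟨x₂, hx₂, 0, h0, add_zero x₂⟩
      obtain ⟨x₁, hx₁, s', hs'S, hxs'⟩ := hx2
      change x₁ + s' = x₂ at hxs' 
      have hsum : x₁ + (s' + s) = x := by rw [← add_assoc, hxs', hxs]
      have hx1x : x₁ = x := by
        by_contra hne'
        exact (g1.2.2 x hx x₁ hx₁ (fun h => hne' h.symm)
          ⟨s' + s, hadd s' hs'S s hsS, hsum⟩).elim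
      subst hx1x
      have : s' + s = 0 := by
        have h' : x₁ + (s' + s) = x₁ + 0 := by rw [add_zero]; exact hsum
        exact add_left_cancel h' 
      have hs0 : s = 0 := by
        funext i
        have := congrFun this i
        simp only [Pi.add_apply, Pi.zero_apply] at this ⊢
        omega
      rw [← hxs, hs0, add_zero]
      exact hx₂
    exact Set.Subset.antisymm (main X₁ X₂ h1 h2 heq) (main X₂ X₁ h2 h1 heq.symm)
end

section
/- Let S be an affine semigroup whose cone has extremal rays τ₁,…,τ_t, and let P be an ideal of S. Then P ∪ {0} is an affine (finitely generated) semigroup with cone equal to the cone of S if and only if there exists Y ⊆ P \ {0} with Y ∩ τ_i ≠ ∅ for all i ∈ {1,…,t}. -/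
open Pointwise

/-!
If `P ∪ {0}` is generated by a finite set `F` and has the cone of `S`, a non-zero point of an
extremal ray `τ i` has a multiple in the monoid generated by `F`; writing it as a sum whose first
summand is a non-zero generator, extremality puts that generator on `τ i`.

Conversely, prune a finite generating set of `S` until no generator lies in the cone of the
others; every remaining generator `g` then spans an extremal ray, and every non-zero `x` of the
cone satisfies `M • x = g + z` for such a `g` and some `z ∈ S`. The ray through `g` is some `τ i`,
which contains a `y ∈ P` with `b • y = a • g`, so `(a * M) • x ∈ y + S ⊆ P`. Hence the cones agree
and every generator `gᵢ` of `S` has a multiple `mᵢ • gᵢ ∈ P`. By Dickson's lemma `P ⊆ B + S` for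
a finite `B ⊆ P`, so `P ∪ {0}` is generated by the finite set `B + {∑ rᵢ • gᵢ | rᵢ < mᵢ}`
together with the `mᵢ • gᵢ`.
-/

section AddMonoid

variable {M : Type*} [AddMonoid M]

theorem exists_mem_add_of_mem_closure {A : Set M} {x : M} (hx : x ∈ AddSubmonoid.closure A)
    (hx0 : x ≠ 0) :
    ∃ g ∈ A, g ≠ 0 ∧ ∃ z ∈ AddSubmonoid.closure A, x = g + z := by
  induction hx using AddSubmonoid.closure_induction with
  | mem g hg => exact ⟨g, hg, hx0, 0, zero_mem _, (add_zero g).symm⟩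
  | zero => exact absurd rfl hx0
  | add a b _ hb iha ihb =>
    by_cases ha0 : a = 0
    · subst ha0
      obtain ⟨g, hg, hg0, z, hz, rfl⟩ := ihb (by simpa using hx0)
      exact ⟨g, hg, hg0, z, hz, zero_add _⟩
    · obtain ⟨g, hg, hg0, z, hz, rfl⟩ := iha ha0
      exact ⟨g, hg, hg0, z + b, add_mem hz hb, add_assoc g z b⟩

theorem closure_subset_union_zero {S : AddSubmonoid M} {P A : Set M} (hPS : P ⊆ S)
    (hP : P + (S : Set M) ⊆ P) (hA : A ⊆ P ∪ {0}) : (AddSubmonoid.closure A : Set M) ⊆ P ∪ {0} := by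
  intro x hx
  induction hx using AddSubmonoid.closure_induction with
  | mem a ha => exact hA ha
  | zero => exact Or.inr rfl
  | add a b _ _ ha hb =>
    rcases ha with ha | rfl
    · rcases hb with hb | rfl
      · exact Or.inl (hP (Set.add_mem_add ha (hPS hb)))
      · exact Or.inl (by simpa using ha)
    · simpa using hb

end AddMonoid

section FinitelyGeneratedMonoid

variable {M : Type*} [AddCommMonoid M]

theorem AddSubmonoid.mem_closure_insert_iff {g x : M} {H : Set M} :
    x ∈ AddSubmonoid.closure (insert g H) ↔
      ∃ k : ℕ, ∃ r ∈ AddSubmonoid.closure H, x = k • g + r := by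
  rw [Set.insert_eq, closure_union, mem_sup]
  simp_rw [mem_closure_singleton]
  constructor
  · rintro ⟨_, ⟨k, rfl⟩, r, hr, rfl⟩
    exact ⟨k, r, hr, rfl⟩
  · rintro ⟨k, r, hr, rfl⟩
    exact ⟨_, ⟨k, rfl⟩, r, hr, rfl⟩

variable {ι : Type*} [Fintype ι]

/-- Dickson's lemma, transported along `c ↦ ∑ i, c i • v i`. -/
theorem exists_finset_subset_add_closure_range (v : ι → M) {P : Set M}
    (hPS : P ⊆ AddSubmonoid.closure (Set.range v)) :
    ∃ B : Finset M, ↑B ⊆ P ∧ P ⊆ (B : Set M) + (AddSubmonoid.closure (Set.range v) : Set M) := by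
  classical
  set φ : (ι → ℕ) → M := fun c => ∑ i, c i • v i with hφ
  have hfin : {c | Minimal (fun c => φ c ∈ P) c}.Finite :=
    WellQuasiOrderedLE.finite_of_isAntichain (setOfPred_minimal_antichain _)
  refine ⟨(hfin.image φ).toFinset, ?_, fun x hx => ?_⟩
  · rintro _ hx
    obtain ⟨c, hc, rfl⟩ := (hfin.image φ).mem_toFinset.1 hx
    exact hc.1
  · obtain ⟨c, rfl⟩ := AddSubmonoid.exists_of_mem_closure_range v x (hPS hx)
    obtain ⟨b, hbc, hb⟩ := exists_minimal_le_of_wellFoundedLT (fun c => φ c ∈ P) c hx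
    refine ⟨φ b, (hfin.image φ).mem_toFinset.2 ⟨b, hb, rfl⟩, φ (c - b),
      sum_mem fun i _ => nsmul_mem (AddSubmonoid.subset_closure (Set.mem_range_self i)) _, ?_⟩
    simp only [hφ, ← Finset.sum_add_distrib, ← add_smul]
    exact Finset.sum_congr rfl fun i _ => by rw [Pi.sub_apply, Nat.add_sub_cancel' (hbc i)]

theorem exists_mem_piFinset_range_add [DecidableEq ι] (v : ι → M) {m : ι → ℕ}
    (hm : ∀ i, 0 < m i) {x : M} (hx : x ∈ AddSubmonoid.closure (Set.range v)) :
    ∃ r ∈ Fintype.piFinset fun i => Finset.range (m i),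
      ∃ y ∈ AddSubmonoid.closure (Set.range fun i => m i • v i), x = ∑ i, r i • v i + y := by
  obtain ⟨c, rfl⟩ := AddSubmonoid.exists_of_mem_closure_range v x hx
  refine ⟨fun i => c i % m i,
    Fintype.mem_piFinset.2 fun i => Finset.mem_range.2 (Nat.mod_lt _ (hm i)),
    ∑ i, (c i / m i) • m i • v i,
    sum_mem fun i _ => nsmul_mem (AddSubmonoid.subset_closure (Set.mem_range_self i)) _, ?_⟩
  simp only [smul_smul, ← Finset.sum_add_distrib, ← add_smul, Nat.mod_add_div']

theorem exists_finset_union_zero_eq_closure (v : ι → M) {P : Set M}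
    (hPS : P ⊆ AddSubmonoid.closure (Set.range v))
    (hP : P + (AddSubmonoid.closure (Set.range v) : Set M) ⊆ P)
    (hmult : ∀ i, ∃ m, 0 < m ∧ m • v i ∈ P ∪ {0}) :
    ∃ F : Finset M, P ∪ {0} = AddSubmonoid.closure (F : Set M) := by
  classical
  choose m hm hmP using hmult
  obtain ⟨B, hBP, hPB⟩ := exists_finset_subset_add_closure_range v hPS
  set F : Finset M := (B ×ˢ Fintype.piFinset fun i => Finset.range (m i)).image
      (fun br => br.1 + ∑ i, br.2 i • v i) ∪ Finset.univ.image fun i => m i • v i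
  refine ⟨F, Set.Subset.antisymm ?_ (closure_subset_union_zero hPS hP ?_)⟩
  · rintro x (hx | rfl)
    · obtain ⟨b, hb, s, hs, rfl⟩ := hPB hx
      obtain ⟨r, hr, y, hy, rfl⟩ := exists_mem_piFinset_range_add v hm hs
      show b + (_ + y) ∈ _
      rw [← add_assoc]
      refine add_mem (AddSubmonoid.subset_closure ?_) (AddSubmonoid.closure_mono ?_ hy)
      · exact Finset.mem_union_left _
          (Finset.mem_image.2 ⟨(b, r), Finset.mem_product.2 ⟨hb, hr⟩, rfl⟩)
      · rintro _ ⟨i, rfl⟩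
        exact Finset.mem_union_right _ (Finset.mem_image_of_mem _ (Finset.mem_univ i))
    · exact zero_mem _
  · intro x hx
    rcases Finset.mem_union.1 hx with hx | hx
    · obtain ⟨⟨b, r⟩, hbr, rfl⟩ := Finset.mem_image.1 hx
      refine Or.inl (hP (Set.add_mem_add (hBP (Finset.mem_product.1 hbr).1) ?_))
      exact sum_mem fun i _ => nsmul_mem (AddSubmonoid.subset_closure (Set.mem_range_self i)) _
    · obtain ⟨i, -, rfl⟩ := Finset.mem_image.1 hx
      exact hmP i

end FinitelyGeneratedMonoid

section Cones

variable {p : ℕ}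

theorem subset_coneOf (S : Set (Fin p → ℕ)) : S ⊆ coneOf S :=
  fun _ hx => ⟨1, one_pos, by simpa using AddSubmonoid.subset_closure hx⟩

theorem coneOf_mono {S T : Set (Fin p → ℕ)} (h : S ⊆ T) : coneOf S ⊆ coneOf T :=
  fun _ ⟨n, hn, hx⟩ => ⟨n, hn, AddSubmonoid.closure_mono h hx⟩

def coneSubmonoid (S : Set (Fin p → ℕ)) : AddSubmonoid (Fin p → ℕ) where
  carrier := coneOf S
  zero_mem' := ⟨1, one_pos, by simp⟩
  add_mem' := by
    rintro x y ⟨n, hn, hx⟩ ⟨m, hm, hy⟩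
    refine ⟨n * m, Nat.mul_pos hn hm, ?_⟩
    rw [smul_add, mul_comm n m, mul_smul, mul_comm m n, mul_smul]
    exact add_mem (nsmul_mem hx m) (nsmul_mem hy n)

theorem coneOf_coneOf (S : Set (Fin p → ℕ)) : coneOf (coneOf S) = coneOf S := by
  refine Set.Subset.antisymm ?_ (subset_coneOf _)
  rintro x ⟨n, hn, hx⟩
  obtain ⟨m, hm, hnx⟩ : n • x ∈ coneSubmonoid S :=
    (AddSubmonoid.closure_le (S := coneSubmonoid S)).2 le_rfl hx
  exact ⟨m * n, Nat.mul_pos hm hn, by rwa [mul_smul]⟩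

theorem coneOf_eq_of_subset_of_subset_coneOf {S T : Set (Fin p → ℕ)} (hST : S ⊆ T)
    (hTS : T ⊆ coneOf S) : coneOf T = coneOf S :=
  Set.Subset.antisymm (coneOf_coneOf S ▸ coneOf_mono hTS) (coneOf_mono hST)

theorem coneOf_closure (S : Set (Fin p → ℕ)) :
    coneOf (AddSubmonoid.closure S : Set (Fin p → ℕ)) = coneOf S :=
  coneOf_eq_of_subset_of_subset_coneOf AddSubmonoid.subset_closure
    ((AddSubmonoid.closure_le (S := coneSubmonoid S)).2 (subset_coneOf S))

def rayOf (C : Set (Fin p → ℕ)) (v : Fin p → ℕ) : Set (Fin p → ℕ) :=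
  {x ∈ C | ∃ a b : ℕ, 0 < b ∧ b • x = a • v}

section Irredundant

variable {g : Fin p → ℕ} {H : Set (Fin p → ℕ)} (hg : g ∉ coneOf H)
include hg

theorem eq_zero_of_nsmul_add_eq_nsmul {r : Fin p → ℕ} (hr : r ∈ AddSubmonoid.closure H) {k A : ℕ}
    (h : k • g + r = A • g) : r = 0 := by
  rcases le_or_gt A k with hAk | hkA
  · rw [← Nat.add_sub_cancel' hAk, add_smul, add_assoc] at h
    exact (add_eq_zero.1 (add_eq_left.1 h)).2
  · rw [← Nat.add_sub_cancel' hkA.le, add_smul] at h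
    exact absurd ⟨A - k, Nat.sub_pos_of_lt hkA, add_left_cancel h ▸ hr⟩ hg

theorem exists_eq_nsmul_of_add_eq_nsmul {y z : Fin p → ℕ}
    (hy : y ∈ AddSubmonoid.closure (insert g H)) (hz : z ∈ AddSubmonoid.closure (insert g H))
    {A : ℕ} (h : y + z = A • g) : ∃ k : ℕ, y = k • g := by
  obtain ⟨k, r, hr, rfl⟩ := AddSubmonoid.mem_closure_insert_iff.1 hy
  obtain ⟨l, s, hs, rfl⟩ := AddSubmonoid.mem_closure_insert_iff.1 hz
  have hrs : (k + l) • g + (r + s) = A • g := by rw [← h, add_smul]; abel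
  have := eq_zero_of_nsmul_add_eq_nsmul hg (add_mem hr hs) hrs
  exact ⟨k, by rw [(add_eq_zero.1 this).1, add_zero]⟩

theorem isExtremalRay_rayOf (hg0 : g ≠ 0) :
    IsExtremalRay (coneOf (insert g H)) (rayOf (coneOf (insert g H)) g) := by
  refine ⟨⟨g, hg0, subset_coneOf _ (Set.mem_insert g H), rfl⟩, ?_⟩
  suffices key : ∀ u ∈ coneOf (insert g H), ∀ w ∈ coneOf (insert g H),
      u + w ∈ rayOf (coneOf (insert g H)) g → u ∈ rayOf (coneOf (insert g H)) g from
    fun u hu w hw huw => ⟨key u hu w hw huw, key w hw u hu (add_comm u w ▸ huw)⟩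
  rintro u ⟨m, hm, hu⟩ w ⟨n, hn, hw⟩ ⟨-, a, b, hb, hab⟩
  have hsum : (m * n * b) • u + (m * n * b) • w = (m * n * a) • g := by
    rw [← smul_add, mul_smul, hab, ← mul_smul]
  have hu' : (m * n * b) • u ∈ AddSubmonoid.closure (insert g H) := by
    rw [show m * n * b = n * b * m by ring, mul_smul]
    exact nsmul_mem hu _
  have hw' : (m * n * b) • w ∈ AddSubmonoid.closure (insert g H) := by
    rw [show m * n * b = m * b * n by ring, mul_smul]
    exact nsmul_mem hw _
  obtain ⟨k, hk⟩ := exists_eq_nsmul_of_add_eq_nsmul hg hu' hw' hsum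
  exact ⟨⟨m, hm, hu⟩, k, m * n * b, by positivity, hk⟩

end Irredundant

theorem exists_subset_coneOf_eq_forall_notMem_coneOf_erase (G : Finset (Fin p → ℕ)) :
    ∃ G' ⊆ G, coneOf (G' : Set (Fin p → ℕ)) = coneOf G ∧
      ∀ g ∈ G', g ∉ coneOf (G'.erase g : Set (Fin p → ℕ)) := by
  obtain ⟨G', hmin⟩ := exists_minimal_of_wellFoundedLT
    (fun G' : Finset (Fin p → ℕ) => G' ⊆ G ∧ coneOf (G' : Set (Fin p → ℕ)) = coneOf G)
    ⟨G, subset_rfl, rfl⟩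
  obtain ⟨hG'G, hcone⟩ := hmin.prop
  refine ⟨G', hG'G, hcone, fun g hg hgc => ?_⟩
  have herase : coneOf (G'.erase g : Set (Fin p → ℕ)) = coneOf G' := by
    refine (coneOf_eq_of_subset_of_subset_coneOf (Finset.coe_subset.2 (G'.erase_subset g))
      fun x hx => ?_).symm
    rcases eq_or_ne x g with rfl | hxg
    · exact hgc
    · exact subset_coneOf _ (Finset.mem_erase.2 ⟨hxg, hx⟩)
  exact hmin.not_prop_of_lt (Finset.erase_ssubset hg)
    ⟨(G'.erase_subset g).trans hG'G, herase.trans hcone⟩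

theorem exists_isExtremalRay_nsmul_eq_add (G : Finset (Fin p → ℕ)) {x : Fin p → ℕ}
    (hx : x ∈ coneOf G) (hx0 : x ≠ 0) :
    ∃ g, IsExtremalRay (coneOf G) (rayOf (coneOf G) g) ∧
      ∃ M, 0 < M ∧ ∃ z ∈ AddSubmonoid.closure (G : Set (Fin p → ℕ)), M • x = g + z := by
  obtain ⟨G', hG'G, hcone, hirr⟩ := exists_subset_coneOf_eq_forall_notMem_coneOf_erase G
  obtain ⟨M, hM, hMx⟩ := hcone ▸ hx
  obtain ⟨g, hg, hg0, z, hz, hgz⟩ := exists_mem_add_of_mem_closure hMx (smul_ne_zero hM.ne' hx0)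
  have hext := isExtremalRay_rayOf (hirr g hg) hg0
  rw [Finset.coe_erase, Set.insert_sdiff_singleton, Set.insert_eq_of_mem hg, hcone] at hext
  exact ⟨g, hext, M, hM, z, AddSubmonoid.closure_mono (Finset.coe_subset.2 hG'G) hz, hgz⟩

end Cones

section Ideals

variable {p : ℕ}

theorem exists_nsmul_mem_of_forall_isExtremalRay {F : Finset (Fin p → ℕ)} {P : Set (Fin p → ℕ)}
    (hP : IsIdealOf (AddSubmonoid.closure (F : Set (Fin p → ℕ))) P)
    (hrays : ∀ ρ, IsExtremalRay (coneOf (AddSubmonoid.closure (F : Set (Fin p → ℕ)))) ρ →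
      (ρ ∩ (P \ {0})).Nonempty)
    {x : Fin p → ℕ} (hx : x ∈ coneOf (AddSubmonoid.closure (F : Set (Fin p → ℕ))))
    (hx0 : x ≠ 0) : ∃ m, 0 < m ∧ m • x ∈ P := by
  rw [coneOf_closure] at hx hrays
  obtain ⟨g, hext, M, hM, z, hz, hMx⟩ := exists_isExtremalRay_nsmul_eq_add F hx hx0
  obtain ⟨y, ⟨-, a, b, hb, hab⟩, hyP, hy0⟩ := hrays _ hext
  have ha : 0 < a := Nat.pos_of_ne_zero fun ha => hy0 <|
    (smul_eq_zero.1 (hab.trans (by rw [ha, zero_smul]))).resolve_left hb.ne'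
  have hsplit : (a * M) • x = y + ((b - 1) • y + a • z) := by
    rw [mul_smul, hMx, smul_add, ← hab, ← add_assoc, ← succ_nsmul', Nat.sub_add_cancel hb]
  refine ⟨a * M, by positivity, hsplit ▸ hP.2 (Set.add_mem_add hyP ?_)⟩
  exact add_mem (nsmul_mem (hP.1 hyP) _) (nsmul_mem hz _)

theorem coneOf_eq_of_forall_nsmul_mem {S P : Set (Fin p → ℕ)} (hPS : P ⊆ S)
    (h : ∀ x ∈ coneOf S, x ≠ 0 → ∃ m, 0 < m ∧ m • x ∈ P) : coneOf P = coneOf S := by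
  refine Set.Subset.antisymm (coneOf_mono hPS) fun x hx => ?_
  rcases eq_or_ne x 0 with rfl | hx0
  · exact (coneSubmonoid P).zero_mem
  · obtain ⟨m, hm, hmx⟩ := h x hx hx0
    exact ⟨m, hm, AddSubmonoid.subset_closure hmx⟩

theorem diff_zero_inter_nonempty_of_union_zero_eq_closure {S P F : Set (Fin p → ℕ)}
    (hF : P ∪ {0} = AddSubmonoid.closure F) (hPS : P ⊆ S) (hcone : coneOf P = coneOf S)
    {ρ : Set (Fin p → ℕ)} (hρ : IsExtremalRay (coneOf S) ρ) : (F \ {0} ∩ ρ).Nonempty := by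
  obtain ⟨⟨v, hv0, hvC, rfl⟩, hext⟩ := hρ
  obtain ⟨n, hn, hnv⟩ := hcone ▸ hvC
  have hC : (AddSubmonoid.closure F : Set (Fin p → ℕ)) ⊆ coneOf S := hF ▸
    Set.union_subset (hPS.trans (subset_coneOf S))
      (Set.singleton_subset_iff.2 (coneSubmonoid S).zero_mem)
  have hnvF : n • v ∈ AddSubmonoid.closure F :=
    AddSubmonoid.closure_le.2 (hF ▸ Set.subset_union_left) hnv
  obtain ⟨f, hf, hf0, z, hz, hfz⟩ := exists_mem_add_of_mem_closure hnvF (smul_ne_zero hn.ne' hv0)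
  have hnvρ : f + z ∈ rayOf (coneOf S) v := hfz ▸ ⟨hC hnvF, n, 1, one_pos, one_smul ℕ _⟩
  exact ⟨f, ⟨hf, hf0⟩, (hext f (hC (AddSubmonoid.subset_closure hf)) z (hC hz) hnvρ).1⟩

theorem isAffine_union_zero_of_forall_nsmul_mem {F : Finset (Fin p → ℕ)} {P : Set (Fin p → ℕ)}
    (hP : IsIdealOf (AddSubmonoid.closure (F : Set (Fin p → ℕ))) P)
    (hmult : ∀ x ∈ coneOf (AddSubmonoid.closure (F : Set (Fin p → ℕ))), x ≠ 0 →
      ∃ m, 0 < m ∧ m • x ∈ P) :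
    IsAffine (P ∪ {0}) := by
  have hF : Set.range ((↑) : F → Fin p → ℕ) = F := Subtype.range_coe_subtype
  refine exists_finset_union_zero_eq_closure ((↑) : F → Fin p → ℕ)
    (hF ▸ hP.1) (hF ▸ hP.2) fun g => ?_
  rcases eq_or_ne (g : Fin p → ℕ) 0 with hg0 | hg0
  · exact ⟨1, one_pos, Or.inr (by simp [hg0])⟩
  · obtain ⟨m, hm, hmg⟩ := hmult g (subset_coneOf _ (AddSubmonoid.subset_closure g.2)) hg0
    exact ⟨m, hm, Or.inl hmg⟩

end Ideals

/-- Let `S` be an affine semigroup whose cone has extremal rays `τ 1, …, τ t`,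
and `P` an ideal of `S`. Then `P ∪ {0}` is an affine semigroup with cone equal
to the cone of `S` iff there exists `Y ⊆ P \ {0}` meeting every extremal ray. -/
theorem statement7 {p t : ℕ} (S : Set (Fin p → ℕ))
    (τ : Fin t → Set (Fin p → ℕ)) (hS : IsAffine S)
    (hτ : RaysOf (coneOf S) τ) (P : Set (Fin p → ℕ)) (hP : IsIdealOf S P) :
    (IsAffine (P ∪ {0}) ∧ coneOf P = coneOf S) ↔
      ∃ Y : Set (Fin p → ℕ), Y ⊆ P \ {0} ∧ ∀ i, (Y ∩ τ i).Nonempty := by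
  obtain ⟨F₀, rfl⟩ := hS
  constructor
  · rintro ⟨⟨F, hF⟩, hcone⟩
    refine ⟨(F : Set (Fin p → ℕ)) \ {0}, fun f ⟨hf, hf0⟩ => ⟨?_, hf0⟩,
      fun i => diff_zero_inter_nonempty_of_union_zero_eq_closure hF hP.1 hcone (hτ.1 i)⟩
    exact (hF ▸ AddSubmonoid.subset_closure hf : f ∈ P ∪ {0}).resolve_right hf0
  · rintro ⟨Y, hYP, hY⟩
    have hrays : ∀ ρ, IsExtremalRay (coneOf _) ρ → (ρ ∩ (P \ {0})).Nonempty := fun ρ hρ => by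
      obtain ⟨i, rfl⟩ := hτ.2.2 ρ hρ
      obtain ⟨y, hyY, hyρ⟩ := hY i
      exact ⟨y, hyρ, hYP hyY⟩
    have hmult : ∀ x ∈ coneOf _, x ≠ 0 → ∃ m, 0 < m ∧ m • x ∈ P :=
      fun x => exists_nsmul_mem_of_forall_isExtremalRay hP hrays
    exact ⟨isAffine_union_zero_of_forall_nsmul_mem hP hmult,
      coneOf_eq_of_forall_nsmul_mem hP.1 hmult⟩
end

section
/- Let S be an affine semigroup and T an I(S)-semigroup. Then imsg_S(T \ {0}) is finite; in fact imsg_S(T \ {0}) equals the set of minimal elements, with respect to ≤_S, of the minimal generating set of T. -/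
open Pointwise

/-- `imsg_S(X)`: the `≤_S`-minimal elements of `X`. -/
def imsg {p : ℕ} (S X : Set (Fin p → ℕ)) : Set (Fin p → ℕ) :=
  {x ∈ X | ∀ y ∈ X, leS S y x → y = x}

lemma msg_subset_diff_zero {p : ℕ} (T : Set (Fin p → ℕ)) : msg T ⊆ T \ {0} :=
  fun _ hx => ⟨hx.1, hx.2.1⟩

lemma mem_or_exists_add_of_mem_closure {p : ℕ} {F : Set (Fin p → ℕ)} {x : Fin p → ℕ}
    (hx : x ∈ AddSubmonoid.closure F) (hx0 : x ≠ 0) :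
    x ∈ F ∨ ∃ a ∈ AddSubmonoid.closure F, ∃ b ∈ AddSubmonoid.closure F,
      a ≠ 0 ∧ b ≠ 0 ∧ x = a + b := by
  induction hx using AddSubmonoid.closure_induction with
  | mem y hy => exact Or.inl hy
  | zero => exact absurd rfl hx0
  | add a b ha hb iha ihb =>
    by_cases ha0 : a = 0
    · subst ha0; simpa using ihb (by simpa using hx0)
    by_cases hb0 : b = 0
    · subst hb0; simpa using iha (by simpa using hx0)
    exact Or.inr ⟨a, ha, b, hb, ha0, hb0, rfl⟩

lemma msg_closure_subset {p : ℕ} (F : Set (Fin p → ℕ)) :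
    msg (AddSubmonoid.closure F : Set (Fin p → ℕ)) ⊆ F := by
  rintro x ⟨hx, hx0, hindec⟩
  exact (mem_or_exists_add_of_mem_closure hx hx0).resolve_right hindec

lemma exists_mem_msg_add {p : ℕ} (M : AddSubmonoid (Fin p → ℕ)) {x : Fin p → ℕ}
    (hx : x ∈ M) (hx0 : x ≠ 0) : ∃ z ∈ msg (M : Set (Fin p → ℕ)), ∃ r ∈ M, x = z + r := by
  induction x using WellFoundedLT.induction with
  | _ x ih =>
    by_cases hmsg : x ∈ msg (M : Set (Fin p → ℕ))
    · exact ⟨x, hmsg, 0, M.zero_mem, (add_zero x).symm⟩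
    obtain ⟨a, ha, b, hb, ha0, hb0, rfl⟩ : ∃ a ∈ M, ∃ b ∈ M, a ≠ 0 ∧ b ≠ 0 ∧ x = a + b := by
      by_contra hindec
      exact hmsg ⟨hx, hx0, hindec⟩
    have hlt : a < a + b := lt_of_le_of_ne le_self_add fun h => hb0 (left_eq_add.mp h)
    obtain ⟨z, hz, r, hr, rfl⟩ := ih a hlt ha ha0
    exact ⟨z, hz, r + b, M.add_mem hr hb, add_assoc z r b⟩

section IdealMinimal

variable {p : ℕ} {S : Set (Fin p → ℕ)} {M : AddSubmonoid (Fin p → ℕ)}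

lemma mem_msg_of_mem_imsg (hideal : IsIdealOf S ((M : Set (Fin p → ℕ)) \ {0}))
    {x : Fin p → ℕ} (hx : x ∈ imsg S ((M : Set (Fin p → ℕ)) \ {0})) :
    x ∈ msg (M : Set (Fin p → ℕ)) := by
  obtain ⟨⟨hxM, hx0⟩, hmin⟩ := hx
  refine ⟨hxM, hx0, ?_⟩
  rintro ⟨a, ha, b, hb, ha0, hb0, rfl⟩
  have hbS : b ∈ S := hideal.1 ⟨hb, hb0⟩
  have hax : a = a + b := hmin a ⟨ha, ha0⟩ ⟨b, hbS, rfl⟩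
  exact hb0 (left_eq_add.mp hax)

/-- With `y + s = x`, the ideal property (or `r = 0`) puts `r + s` in `S`. -/
lemma exists_mem_msg_leS_of_leS (hideal : IsIdealOf S ((M : Set (Fin p → ℕ)) \ {0}))
    {y x : Fin p → ℕ} (hy : y ∈ (M : Set (Fin p → ℕ)) \ {0}) (hyx : leS S y x) :
    ∃ z ∈ msg (M : Set (Fin p → ℕ)), ∃ r, y = z + r ∧ leS S z x := by
  obtain ⟨s, hs, rfl⟩ := hyx
  obtain ⟨z, hz, r, hr, rfl⟩ := exists_mem_msg_add M hy.1 hy.2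
  refine ⟨z, hz, r, rfl, r + s, ?_, (add_assoc z r s).symm⟩
  by_cases hr0 : r = 0
  · simpa [hr0] using hs
  · exact hideal.1 (hideal.2 (Set.add_mem_add ⟨hr, hr0⟩ hs))

lemma imsg_diff_zero_eq_imsg_msg (hideal : IsIdealOf S ((M : Set (Fin p → ℕ)) \ {0})) :
    imsg S ((M : Set (Fin p → ℕ)) \ {0}) = imsg S (msg (M : Set (Fin p → ℕ))) := by
  ext x
  constructor
  · intro hx
    exact ⟨mem_msg_of_mem_imsg hideal hx,
      fun y hy hyx => hx.2 y (msg_subset_diff_zero _ hy) hyx⟩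
  · rintro ⟨hxmsg, hmin⟩
    refine ⟨msg_subset_diff_zero _ hxmsg, fun y hy hyx => ?_⟩
    obtain ⟨z, hz, r, rfl, hzx⟩ := exists_mem_msg_leS_of_leS hideal hy hyx
    obtain rfl := hmin z hz hzx
    obtain ⟨s, -, hs⟩ := hyx
    have hrs : r + s = 0 := left_eq_add.mp (by rw [← add_assoc]; exact hs.symm)
    rw [(add_eq_zero.mp hrs).1, add_zero]

end IdealMinimal

theorem statement9_general {p : ℕ} (S T : Set (Fin p → ℕ))
    (hT : ISemigroupOf S T) :
    {x ∈ T \ {0} | ∀ y ∈ T \ {0}, leS S y x → y = x}.Finite ∧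
    {x ∈ T \ {0} | ∀ y ∈ T \ {0}, leS S y x → y = x}
      = {x ∈ msg T | ∀ y ∈ msg T, leS S y x → y = x} := by
  obtain ⟨⟨F, rfl⟩, -, hideal⟩ := hT
  have heq := imsg_diff_zero_eq_imsg_msg hideal
  refine ⟨?_, heq⟩
  change (imsg S _).Finite
  rw [heq]
  exact F.finite_toSet.subset fun x hx => msg_closure_subset _ hx.1

/-- For an `I(S)`-semigroup `T`, the set `imsg_S(T \ {0})` of `≤_S`-minimal
elements of `T \ {0}` is finite and equals the set of `≤_S`-minimal elements of
the minimal generating set of `T`. -/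
theorem statement9 {p : ℕ} (S T : Set (Fin p → ℕ)) (hS : IsAffine S)
    (hT : ISemigroupOf S T) :
    {x ∈ T \ {0} | ∀ y ∈ T \ {0}, leS S y x → y = x}.Finite ∧
    {x ∈ T \ {0} | ∀ y ∈ T \ {0}, leS S y x → y = x}
      = {x ∈ msg T | ∀ y ∈ msg T, leS S y x → y = x} :=
  statement9_general S T hT
end

section
/- Let S be a 𝒞-semigroup with a fixed monomial order ⪯ on ℕ^p, and let T be an I(S)-semigroup with T ≠ S. Then T ∪ {max_⪯(S \ T)} is again an I(S)-semigroup. -/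
open Pointwise

/-- Let `S` be a `𝒞`-semigroup, `⪯` a monomial order, and `T` an
`I(S)`-semigroup with `T ≠ S`. Then `T ∪ {max_⪯ (S \ T)}` is an
`I(S)`-semigroup. -/
theorem statement10 {p : ℕ} (le : (Fin p → ℕ) → (Fin p → ℕ) → Prop)
    (hle : IsMonomialOrder le) (S T : Set (Fin p → ℕ)) (hS : CSemigroup S)
    (hT : ISemigroupOf S T) (hTS : T ≠ S) (m : Fin p → ℕ)
    (hm : m ∈ S \ T) (hmax : ∀ x ∈ S \ T, le x m) :
    ISemigroupOf S (T ∪ {m}) := by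
  obtain ⟨hrefl, htrans, hanti, htot, haddc, hzero⟩ := hle
  obtain ⟨hTaff, hT0, hTsubS, hTideal⟩ := hT
  obtain ⟨FS, hFS⟩ := hS.1
  have hSclosed : ∀ a ∈ S, ∀ b ∈ S, a + b ∈ S := by
    intro a ha b hb
    rw [hFS] at ha hb ⊢
    exact add_mem ha hb
  have hmne : m ≠ 0 := fun h => hm.2 (h ▸ hT0)
  have key : ∀ s ∈ S, s ≠ 0 → m + s ∈ T := by
    intro s hs hs0
    by_contra hns
    have h1 : le (m + s) m := hmax _ ⟨hSclosed m hm.1 s hs, hns⟩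
    have h2 : le m (m + s) := by
      have := haddc 0 s m (hzero s)
      simpa [add_comm] using this
    have heq : m = m + s := hanti _ _ h2 h1
    exact hs0 (left_eq_add.mp heq)
  obtain ⟨F, hF⟩ := hTaff
  have hTclosed : ∀ a ∈ T, ∀ b ∈ T, a + b ∈ T := by
    intro a ha b hb
    rw [hF] at ha hb ⊢
    exact add_mem ha hb
  have hUclosed : ∀ a ∈ T ∪ {m}, ∀ b ∈ T ∪ {m}, a + b ∈ T ∪ {m} := by
    intro a ha b hb
    rcases ha with ha | ha
    · rcases hb with hb | hb
      · exact Or.inl (hTclosed a ha b hb)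
      · rw [Set.mem_singleton_iff] at hb
        rcases eq_or_ne a 0 with rfl | h0
        · exact Or.inr (by simp [hb])
        · rw [hb, add_comm]
          exact Or.inl (key a (hTsubS ⟨ha, h0⟩) h0)
    · rw [Set.mem_singleton_iff] at ha
      rcases hb with hb | hb
      · rcases eq_or_ne b 0 with rfl | h0
        · exact Or.inr (by simp [ha])
        · rw [ha]
          exact Or.inl (key b (hTsubS ⟨hb, h0⟩) h0)
      · rw [Set.mem_singleton_iff] at hb
        rw [ha, hb]
        exact Or.inl (key m hm.1 hmne)
  refine ⟨⟨insert m F, ?_⟩, Or.inl hT0, ?_, ?_⟩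
  · ext x
    constructor
    · rintro (hx | hx)
      · rw [hF] at hx
        exact AddSubmonoid.closure_mono (by simp [Set.subset_insert]) hx
      · rw [Set.mem_singleton_iff] at hx
        subst hx
        exact AddSubmonoid.subset_closure (by simp)
    · intro hx
      refine AddSubmonoid.closure_induction (fun y hy => ?_) (Or.inl hT0)
        (fun a b _ _ hxa hxb => hUclosed a hxa b hxb) hx
      have hy' : y ∈ insert m F := by exact_mod_cast hy
      rcases Finset.mem_insert.mp hy' with rfl | hyF
      · exact Or.inr rfl
      · exact Or.inl (hF ▸ AddSubmonoid.subset_closure hyF)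
  · rintro x ⟨hx | hx, hx0⟩
    · exact hTsubS ⟨hx, hx0⟩
    · rw [Set.mem_singleton_iff] at hx
      subst hx
      exact hm.1
  · rintro x hx
    rw [Set.mem_add] at hx
    obtain ⟨a, ha, s, hs, rfl⟩ := hx
    obtain ⟨ha', ha0⟩ := ha
    constructor
    · rcases ha' with haT | haM
      · exact Or.inl (hTideal (Set.add_mem_add ⟨haT, ha0⟩ hs)).1
      · rw [Set.mem_singleton_iff] at haM
        subst haM
        rcases eq_or_ne s 0 with rfl | hs0
        · simp
        · exact Or.inl (key s hs hs0)
    · simp only [Set.mem_singleton_iff] at ha0 ⊢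
      intro h
      exact ha0 (add_eq_zero.mp h).1
end

section
/- Let S be an affine semigroup, T an I(S)-semigroup, and x a minimal generator of T. Then T \ {x} is an I(S)-semigroup if and only if x ∈ imsg_S(T \ {0}), i.e., x is a ≤_S-minimal element of T \ {0}. -/
open Pointwise

section AuxForStatement11

/-- Extract a nonzero summand from a multiset sum. -/
private lemma extract11' {p : ℕ} {B : Set (Fin p → ℕ)} :
    ∀ (l : Multiset (Fin p → ℕ)), (∀ y ∈ l, y ∈ B) → l.sum ≠ 0 →
      ∃ f ∈ B, f ≠ 0 ∧ ∃ s', s' ∈ AddSubmonoid.closure B ∧ l.sum = f + s' := by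
  intro l
  induction l using Multiset.induction with
  | empty => intro _ h; simp at h
  | cons a l ih =>
    intro hmem hsum
    rw [Multiset.sum_cons] at hsum ⊢
    by_cases ha : a = 0
    · subst ha; rw [zero_add] at hsum ⊢
      exact ih (fun y hy => hmem y (Multiset.mem_cons_of_mem hy)) hsum
    · exact ⟨a, hmem a (Multiset.mem_cons_self a l), ha, l.sum,
        AddSubmonoid.multiset_sum_mem _ _ (fun y hy => AddSubmonoid.subset_closure
          (hmem y (Multiset.mem_cons_of_mem hy))), rfl⟩

private lemma extract11 {p : ℕ} {B : Set (Fin p → ℕ)} {s : Fin p → ℕ}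
    (hs : s ∈ AddSubmonoid.closure B) (h0 : s ≠ 0) :
    ∃ f ∈ B, f ≠ 0 ∧ ∃ s', s' ∈ AddSubmonoid.closure B ∧ s = f + s' := by
  obtain ⟨l, hl, rfl⟩ := AddSubmonoid.exists_multiset_of_mem_closure hs
  exact extract11' l hl h0

/-- A minimal generator of `T` is not in the monoid generated by the other
generators. -/
private lemma msg_notMem11 {p : ℕ} {T : Set (Fin p → ℕ)} {F : Finset (Fin p → ℕ)}
    (hF : T = (AddSubmonoid.closure (F : Set (Fin p → ℕ)) : Set (Fin p → ℕ)))
    {x : Fin p → ℕ} (hx : x ∈ msg T) :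
    x ∉ AddSubmonoid.closure ((F : Set (Fin p → ℕ)) \ {x}) := by
  intro hmem
  obtain ⟨hxT, hx0, hnsum⟩ := hx
  obtain ⟨f, hfF, hf0, s', hs', heq⟩ := extract11 hmem hx0
  have hfT : f ∈ T := by
    rw [hF]; exact AddSubmonoid.subset_closure hfF.1
  by_cases hs0 : s' = 0
  · subst hs0; rw [add_zero] at heq
    exact hfF.2 (by simp [← heq])
  · apply hnsum
    refine ⟨f, hfT, s', ?_, hf0, hs0, heq⟩
    rw [hF]
    exact AddSubmonoid.closure_mono Set.diff_subset hs'

private lemma key_ind11 {p : ℕ} {x : Fin p → ℕ} {B : Set (Fin p → ℕ)}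
    {A : AddSubmonoid (Fin p → ℕ)}
    (hBA : AddSubmonoid.closure B ≤ A) (hxB : ∀ f ∈ B, f ≠ 0 → x + f ∈ A)
    (h2 : x + x ∈ A) (h3 : x + x + x ∈ A) :
    ∀ (k : ℕ) (s : Fin p → ℕ), s ∈ AddSubmonoid.closure B → k • x + s ≠ x →
      k • x + s ∈ A := by
  intro k
  induction k using Nat.strong_induction_on with
  | _ k ih =>
    match k with
    | 0 => intro s hs _; simpa using hBA hs
    | 1 =>
      intro s hs hne
      rw [one_nsmul] at hne ⊢
      have hs0 : s ≠ 0 := by rintro rfl; simp at hne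
      obtain ⟨f, hfB, hf0, s', hs', rfl⟩ := extract11 hs hs0
      rw [← add_assoc]
      exact add_mem (hxB f hfB hf0) (hBA hs')
    | (n+2) =>
      intro s hs hne
      have hdec : (n+2) • x + s = (x + x) + (n • x + s) := by
        rw [add_nsmul, two_nsmul]; ring
      rw [hdec]
      by_cases hc : n • x + s = x
      · rw [hc]; exact h3
      · exact add_mem h2 (ih n (by omega) s hs hc)

end AuxForStatement11

/-- Let `T` be an `I(S)`-semigroup and `x` a minimal generator of `T`. Then
`T \ {x}` is an `I(S)`-semigroup iff `x` is a `≤_S`-minimal element of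
`T \ {0}`. -/
theorem statement11 {p : ℕ} (S T : Set (Fin p → ℕ)) (hS : IsAffine S)
    (hT : ISemigroupOf S T) (x : Fin p → ℕ) (hx : x ∈ msg T) :
    ISemigroupOf S (T \ {x}) ↔
      x ∈ {y ∈ T \ {0} | ∀ z ∈ T \ {0}, leS S z y → z = y} := by
  obtain ⟨hTaff, h0T, hTsub, hTadd⟩ := hT
  obtain ⟨hxT, hx0, hnsum⟩ := hx
  constructor
  · rintro ⟨-, -, -, hadd⟩
    refine ⟨⟨hxT, hx0⟩, ?_⟩
    rintro z ⟨hzT, hz0⟩ ⟨s, hsS, hzs⟩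
    by_contra hzx
    have hz : z ∈ (T \ {x}) \ {0} := ⟨⟨hzT, hzx⟩, hz0⟩
    have h2 := hadd (Set.add_mem_add hz hsS)
    rw [hzs] at h2
    exact h2.1.2 rfl
  · rintro ⟨-, hmin⟩
    obtain ⟨F, hF⟩ := hTaff
    have hTsubm : ∀ a ∈ T, ∀ b ∈ T, a + b ∈ T := by
      intro a ha b hb
      rw [hF] at ha hb ⊢
      exact add_mem ha hb
    -- T \ {x} is closed under addition and contains 0
    have hM0 : (0 : Fin p → ℕ) ∈ T \ {x} := ⟨h0T, fun h => hx0 (Set.mem_singleton_iff.mp h).symm⟩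
    have hMadd : ∀ a ∈ T \ {x}, ∀ b ∈ T \ {x}, a + b ∈ T \ {x} := by
      rintro a ⟨haT, hax⟩ b ⟨hbT, hbx⟩
      refine ⟨hTsubm a haT b hbT, ?_⟩
      intro h
      rw [Set.mem_singleton_iff] at h
      rcases eq_or_ne a 0 with rfl | ha0
      · rw [zero_add] at h; exact hbx h
      rcases eq_or_ne b 0 with rfl | hb0
      · rw [add_zero] at h; exact hax h
      exact hnsum ⟨a, haT, b, hbT, ha0, hb0, h.symm⟩
    refine ⟨?_, hM0, ?_, ?_⟩
    · -- IsAffine (T \ {x})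
      classical
      set G : Finset (Fin p → ℕ) := (F.erase x).erase 0 with hG
      set Afin : Finset (Fin p → ℕ) :=
        (G ∪ G.image (fun f => x + f)) ∪ {x + x, x + x + x} with hAfin
      have hGmem : ∀ y, y ∈ (G : Set (Fin p → ℕ)) → y ≠ 0 ∧ y ≠ x ∧ y ∈ F := by
        intro y hy
        rw [Finset.mem_coe, hG, Finset.mem_erase, Finset.mem_erase] at hy
        exact hy
      have hGF : (G : Set (Fin p → ℕ)) ⊆ (F : Set (Fin p → ℕ)) \ {x} := by
        intro y hy
        obtain ⟨hy0, hyx, hyF⟩ := hGmem y hy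
        exact ⟨Finset.mem_coe.mpr hyF, fun h => hyx (Set.mem_singleton_iff.mp h)⟩
      have hGT : ∀ y ∈ G, y ∈ T := by
        intro y hy
        rw [hF]
        exact AddSubmonoid.subset_closure (hGF hy).1
      have hAsub : (Afin : Set (Fin p → ℕ)) ⊆ T \ {x} := by
        intro y hy
        rw [Finset.mem_coe, hAfin] at hy
        simp only [Finset.mem_union, Finset.mem_image, Finset.mem_insert,
          Finset.mem_singleton] at hy
        rcases hy with (hy | ⟨f, hf, rfl⟩) | (rfl | rfl)
        · have hy' := hGmem y (Finset.mem_coe.mpr hy)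
          exact ⟨hGT y hy, fun h => hy'.2.1 (Set.mem_singleton_iff.mp h)⟩
        · have hf' := hGmem f (Finset.mem_coe.mpr hf)
          refine ⟨hTsubm x hxT f (hGT f hf), fun h => hf'.1 ?_⟩
          exact add_eq_left.mp (Set.mem_singleton_iff.mp h)
        · exact ⟨hTsubm x hxT x hxT,
            fun h => hx0 (add_eq_left.mp (Set.mem_singleton_iff.mp h))⟩
        · refine ⟨hTsubm _ (hTsubm x hxT x hxT) x hxT, fun h => hx0 ?_⟩
          have h' : x + x = 0 := add_eq_right.mp (Set.mem_singleton_iff.mp h)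
          exact (add_eq_zero.mp h').1
      refine ⟨Afin, Set.Subset.antisymm ?_ ?_⟩
      · -- T \ {x} ⊆ closure Afin
        rintro t ⟨htT, htx⟩
        rw [Set.mem_singleton_iff] at htx
        have htc : t ∈ AddSubmonoid.closure (F : Set (Fin p → ℕ)) := by
          rw [hF] at htT; exact htT
        obtain ⟨l, hl, hsum⟩ := AddSubmonoid.exists_multiset_of_mem_closure htc
        set m := l.filter (fun y => ¬ y = x) with hm
        have hldec : l.filter (fun y => y = x) + m = l := Multiset.filter_add_not _ l
        have hfx : l.filter (fun y => y = x) = Multiset.replicate (l.count x) x := by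
          simpa using Multiset.filter_eq' l x
        have htdec : t = (l.count x) • x + m.sum := by
          have h1 : l.sum = (Multiset.filter (fun y => y = x) l).sum + m.sum := by
            rw [← Multiset.sum_add, hldec]
          rw [← hsum, h1, hfx, Multiset.sum_replicate]
        have hmG : m.sum ∈ AddSubmonoid.closure (G : Set (Fin p → ℕ)) := by
          refine AddSubmonoid.multiset_sum_mem _ _ ?_
          intro y hy
          rw [hm, Multiset.mem_filter] at hy
          rcases eq_or_ne y 0 with rfl | hy0
          · exact zero_mem _
          · refine AddSubmonoid.subset_closure ?_
            rw [Finset.mem_coe, hG, Finset.mem_erase, Finset.mem_erase]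
            exact ⟨hy0, hy.2, Finset.mem_coe.mp (hl y hy.1)⟩
        have hclo : AddSubmonoid.closure ((G : Set (Fin p → ℕ))) ≤
            AddSubmonoid.closure (Afin : Set (Fin p → ℕ)) := by
          apply AddSubmonoid.closure_le.mpr
          intro y hy
          refine AddSubmonoid.subset_closure ?_
          rw [Finset.mem_coe, hAfin]
          exact Finset.mem_union_left _ (Finset.mem_union_left _ (Finset.mem_coe.mp hy))
        have hxA : ∀ f ∈ (G : Set (Fin p → ℕ)), f ≠ 0 →
            x + f ∈ AddSubmonoid.closure (Afin : Set (Fin p → ℕ)) := by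
          intro f hf _
          refine AddSubmonoid.subset_closure ?_
          rw [Finset.mem_coe, hAfin]
          refine Finset.mem_union_left _ (Finset.mem_union_right _ ?_)
          exact Finset.mem_image.mpr ⟨f, Finset.mem_coe.mp hf, rfl⟩
        have h2A : x + x ∈ AddSubmonoid.closure (Afin : Set (Fin p → ℕ)) := by
          refine AddSubmonoid.subset_closure ?_
          simp [hAfin]
        have h3A : x + x + x ∈ AddSubmonoid.closure (Afin : Set (Fin p → ℕ)) := by
          refine AddSubmonoid.subset_closure ?_
          simp [hAfin]
        rw [htdec]
        exact key_ind11 hclo hxA h2A h3A _ _ hmG (htdec ▸ htx)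
      · -- closure Afin ⊆ T \ {x}
        intro t ht
        obtain ⟨l, hl, rfl⟩ := AddSubmonoid.exists_multiset_of_mem_closure ht
        induction l using Multiset.induction with
        | empty => simpa using hM0
        | cons a l ih =>
          rw [Multiset.sum_cons]
          exact hMadd a (hAsub (hl a (Multiset.mem_cons_self a l))) l.sum
            (ih (fun y hy => hl y (Multiset.mem_cons_of_mem hy))
              (AddSubmonoid.multiset_sum_mem _ _
                (fun y hy => AddSubmonoid.subset_closure (hl y (Multiset.mem_cons_of_mem hy)))))
    · -- (T \ {x}) \ {0} ⊆ S
      rintro y ⟨⟨hyT, -⟩, hy0⟩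
      exact hTsub ⟨hyT, hy0⟩
    · -- ideal property
      intro y hy
      obtain ⟨a, ha, b, hb, rfl⟩ := Set.mem_add.mp hy
      have hab : a + b ∈ T \ {0} := hTadd (Set.add_mem_add ⟨ha.1.1, ha.2⟩ hb)
      refine ⟨⟨hab.1, ?_⟩, hab.2⟩
      intro h
      rw [Set.mem_singleton_iff] at h
      have := hmin a ⟨ha.1.1, ha.2⟩ ⟨b, hb, h⟩
      exact ha.1.2 (Set.mem_singleton_iff.mpr this)
end

section
/- Let S be an affine semigroup and x ∈ S \ {0}. Then S \ {x} is an affine semigroup if and only if x is a minimal generator of S. -/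
open Pointwise

/-! If `x` is a minimal generator of `S = ⟨F⟩`, then `S \ {x}` is closed under addition and is
generated by `F \ {x}`, `2x`, `3x` and the `x + f` with `0 ≠ f ∈ F \ {x}`: adding `x` to a non-zero
element of the monoid these generate stays inside it, so together with `x` they generate `S`.
Conversely, if `S \ {x}` is closed under addition, `x = a + b` with `a, b ≠ 0` is impossible, since
cancellativity forces `a, b ≠ x`. -/

namespace AddSubmonoid

section AddCommMonoid

variable {M : Type*} [AddCommMonoid M]

def diffSingletonGens (F : Set M) (x : M) : Set M :=
  F \ {x} ∪ {x + x, x + x + x} ∪ (x + ·) '' (F \ {x, 0})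

theorem finite_diffSingletonGens {F : Set M} (hF : F.Finite) (x : M) :
    (diffSingletonGens F x).Finite :=
  (hF.sdiff.union (Set.toFinite _)).union (hF.sdiff.image _)

theorem add_mem_closure_diffSingletonGens (F : Set M) (x : M) {g : M}
    (hg : g ∈ closure (diffSingletonGens F x)) (hg0 : g ≠ 0) :
    x + g ∈ closure (diffSingletonGens F x) := by
  set C := closure (diffSingletonGens F x)
  have hgen : ∀ {y}, y ∈ diffSingletonGens F x → y ∈ C := fun hy => subset_closure hy
  have hxx : x + x ∈ C := hgen (by simp [diffSingletonGens])
  suffices ∀ g ∈ C, g = 0 ∨ x + g ∈ C from (this g hg).resolve_left hg0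
  intro g hg
  induction hg using closure_induction with
  | zero => exact .inl rfl
  | mem y hy =>
    obtain (⟨hyF, hyx⟩ | rfl | rfl) | ⟨f, ⟨hfF, hf⟩, rfl⟩ := hy
    · by_cases hy0 : y = 0
      · exact .inl hy0
      · exact .inr (hgen (.inr ⟨y, ⟨hyF, fun h => h.elim hyx hy0⟩, rfl⟩))
    · exact .inr (hgen (by simp [diffSingletonGens, add_assoc]))
    · exact .inr (by simpa only [add_assoc, add_left_comm x] using add_mem hxx hxx)
    · have hfx : f ∉ ({x} : Set M) := fun h => hf (.inl h)
      refine .inr ?_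
      simp only [← add_assoc]
      exact add_mem hxx (hgen (.inl (.inl ⟨hfF, hfx⟩)))
  | add a b _ hbC ha hb =>
    rcases ha with rfl | ha
    · simpa using hb
    · exact .inr (by simpa only [add_assoc] using add_mem ha hbC)

theorem closure_subset_closure_diffSingletonGens_insert (F : Set M) (x : M) :
    (closure F : Set M) ⊆ insert x (closure (diffSingletonGens F x)) := by
  set C := closure (diffSingletonGens F x)
  intro s hs
  induction hs using closure_induction with
  | zero => exact .inr (zero_mem C)
  | mem f hf =>
    by_cases hfx : f = x
    · exact .inl hfx
    · exact .inr (subset_closure (.inl (.inl ⟨hf, hfx⟩)))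
  | add a b _ _ ha hb =>
    have hxx : x + x ∈ C := subset_closure (by simp [diffSingletonGens])
    have hxa : ∀ {a}, a ∈ C → x + a ∈ insert x (C : Set M) := fun {a} ha => by
      by_cases ha0 : a = 0
      · simp [ha0]
      · exact .inr (add_mem_closure_diffSingletonGens F x ha ha0)
    rcases ha with rfl | ha <;> rcases hb with rfl | hb
    · exact .inr hxx
    · exact hxa hb
    · rw [add_comm]; exact hxa ha
    · exact .inr (add_mem ha hb)

theorem add_mem_diff_singleton {S : AddSubmonoid M} {x : M}
    (hx : ∀ a ∈ S, ∀ b ∈ S, a + b = x → a = 0 ∨ b = 0) {a b : M}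
    (ha : a ∈ (S : Set M) \ {x}) (hb : b ∈ (S : Set M) \ {x}) :
    a + b ∈ (S : Set M) \ {x} := by
  refine ⟨add_mem ha.1 hb.1, fun hab => ?_⟩
  rcases hx a ha.1 b hb.1 hab with rfl | rfl
  · exact hb.2 (by simpa using hab)
  · exact ha.2 (by simpa using hab)

end AddCommMonoid

section AddCancelCommMonoid

variable {M : Type*} [AddCancelCommMonoid M]

theorem eq_zero_or_eq_zero_of_add_mem_diff_singleton {S : AddSubmonoid M} {x : M} (hx0 : x ≠ 0)
    (hS : ∀ a ∈ (S : Set M) \ {x}, ∀ b ∈ (S : Set M) \ {x}, a + b ∈ (S : Set M) \ {x})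
    {a b : M} (ha : a ∈ S) (hb : b ∈ S) (hab : a + b = x) : a = 0 ∨ b = 0 := by
  by_contra! h
  have hax : a ≠ x := by rintro rfl; exact h.2 (add_eq_left.mp hab)
  have hbx : b ≠ x := by rintro rfl; exact h.1 (add_eq_right.mp hab)
  exact (hS a ⟨ha, hax⟩ b ⟨hb, hbx⟩).2 hab

theorem coe_closure_diffSingletonGens [Subsingleton (AddUnits M)] {F : Set M} {x : M}
    (hxF : x ∈ closure F) (hx0 : x ≠ 0)
    (hx : ∀ a ∈ closure F, ∀ b ∈ closure F, a + b = x → a = 0 ∨ b = 0) :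
    (closure (diffSingletonGens F x) : Set M) = (closure F : Set M) \ {x} := by
  refine subset_antisymm (fun g hg => ?_) fun s ⟨hs, hsx⟩ =>
    (closure_subset_closure_diffSingletonGens_insert F x hs).resolve_left hsx
  induction hg using closure_induction with
  | zero => exact ⟨zero_mem _, Ne.symm hx0⟩
  | mem y hy =>
    have hxx : x + x ∈ closure F := add_mem hxF hxF
    obtain (⟨hyF, hyx⟩ | rfl | rfl) | ⟨f, ⟨hfF, hf⟩, rfl⟩ := hy
    · exact ⟨subset_closure hyF, hyx⟩
    · exact ⟨hxx, fun h => hx0 (add_eq_right.mp h)⟩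
    · refine ⟨add_mem hxx hxF, fun h => hx0 ?_⟩
      -- `x + x + x = x` would make `x + x` an additive unit
      exact (add_eq_zero.mp (add_eq_right.mp h)).1
    · exact ⟨add_mem hxF (subset_closure hfF), fun h => hf (.inr (add_eq_left.mp h))⟩
  | add a b _ _ ha hb => exact add_mem_diff_singleton hx ha hb

end AddCancelCommMonoid

end AddSubmonoid

theorem mem_msg_iff {p : ℕ} {S : Set (Fin p → ℕ)} {x : Fin p → ℕ} :
    x ∈ msg S ↔ x ∈ S ∧ x ≠ 0 ∧ ∀ a ∈ S, ∀ b ∈ S, a + b = x → a = 0 ∨ b = 0 := by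
  simp only [msg, Set.mem_ofPred_eq]
  grind

/-- For an affine semigroup `S` and `x ∈ S \ {0}`, the set `S \ {x}` is an
affine semigroup iff `x` is a minimal generator of `S`. -/
theorem statement12 {p : ℕ} (S : Set (Fin p → ℕ)) (hS : IsAffine S)
    (x : Fin p → ℕ) (hx : x ∈ S \ {0}) :
    IsAffine (S \ {x}) ↔ x ∈ msg S := by
  obtain ⟨F, rfl⟩ := hS
  obtain ⟨hxF, hx0 : x ≠ 0⟩ := hx
  rw [mem_msg_iff]
  constructor
  · rintro ⟨G, hG⟩
    have hclosed : ∀ a ∈ (AddSubmonoid.closure (F : Set (Fin p → ℕ)) : Set _) \ {x},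
        ∀ b ∈ (AddSubmonoid.closure (F : Set (Fin p → ℕ)) : Set _) \ {x},
        a + b ∈ (AddSubmonoid.closure (F : Set (Fin p → ℕ)) : Set _) \ {x} := by
      rw [hG]; exact fun a ha b hb => add_mem ha hb
    exact ⟨hxF, hx0, fun a ha b hb =>
      AddSubmonoid.eq_zero_or_eq_zero_of_add_mem_diff_singleton hx0 hclosed ha hb⟩
  · rintro ⟨-, -, hx⟩
    refine ⟨(AddSubmonoid.finite_diffSingletonGens F.finite_toSet x).toFinset, ?_⟩
    rw [Set.Finite.coe_toFinset, AddSubmonoid.coe_closure_diffSingletonGens hxF hx0 hx]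
end

section
/- Let S be an affine semigroup minimally generated by E ⊔ A with E = {n₁,…,n_t} the i-multiplicities, such that for every m ∈ A there is some fixed k ∈ [t] with m − n_k ∈ 𝒞_S. If S_k = {x ∈ 𝒞_S : x + n_k ∈ S} is closed under addition (a semigroup), then S is a MED-semigroup. -/
open Pointwise

/-!
If a non-zero `x ∈ ⋂ i, Ap(S, n i)` were not a minimal generator, it would be `m + m' + s` with
`m, m'` generators and `s ∈ S`. As `x ∈ Ap(S, n i)`, neither `m` nor `m'` is some `n i`, so
`m, m' ∈ A`; writing `m = n k + c`, `m' = n k + c'` with `c, c' ∈ S_k`, closedness of `S_k` gives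
`m + m' - n k = c + c' + n k ∈ S`, so `x - n k ∈ S`, contradicting `x ∈ Ap(S, n k)`.
-/

lemma AddSubmonoid.exists_add_eq_of_mem_closure {M : Type*} [AddMonoid M] {G : Set M} {a : M}
    (ha : a ∈ AddSubmonoid.closure G) (ha0 : a ≠ 0) :
    ∃ g ∈ G, ∃ s ∈ AddSubmonoid.closure G, g + s = a := by
  induction ha using AddSubmonoid.closure_induction_left with
  | zero => exact absurd rfl ha0
  | add_left g hg s hs _ => exact ⟨g, hg, s, hs, rfl⟩

lemma exists_add_add_eq_of_notMem_msg {p : ℕ} {G : Set (Fin p → ℕ)} {x : Fin p → ℕ}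
    (hx : x ∈ AddSubmonoid.closure G) (hx0 : x ≠ 0)
    (hnm : x ∉ msg (AddSubmonoid.closure G : Set (Fin p → ℕ))) :
    ∃ g ∈ G, ∃ h ∈ G, ∃ s ∈ AddSubmonoid.closure G, g + h + s = x := by
  obtain ⟨a, ha, b, hb, ha0, hb0, rfl⟩ : ∃ a ∈ AddSubmonoid.closure G, ∃ b ∈ AddSubmonoid.closure G,
      a ≠ 0 ∧ b ≠ 0 ∧ x = a + b := by
    by_contra hsplit
    exact hnm ⟨hx, hx0, hsplit⟩
  obtain ⟨g, hg, s, hs, rfl⟩ := AddSubmonoid.exists_add_eq_of_mem_closure ha ha0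
  obtain ⟨h, hh, s', hs', rfl⟩ := AddSubmonoid.exists_add_eq_of_mem_closure hb hb0
  exact ⟨g, hg, h, hh, s + s', add_mem hs hs', by abel⟩

/-- One direction of the Proposition characterising MED-semigroups. -/
lemma mem_msg_of_mem_iInter_Ap {p : ℕ} {ι : Type*} [Nonempty ι] (S : Set (Fin p → ℕ))
    (e : ι → Fin p → ℕ) (A : Set (Fin p → ℕ))
    (hgen : S = (AddSubmonoid.closure (Set.range e ∪ A) : Set (Fin p → ℕ)))
    (hA : ∀ m ∈ A, ∀ m' ∈ A, ∃ i, ∃ u ∈ S, e i + u = m + m') :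
    ∀ x ∈ ⋂ i, Ap S (e i), x ≠ 0 → x ∈ msg S := by
  subst hgen
  intro x hx hx0
  have hAp : ∀ i, ∀ u ∈ AddSubmonoid.closure (Set.range e ∪ A), e i + u ≠ x :=
    fun i u hu hux => (Set.mem_iInter.mp hx i).2 ⟨u, hu, hux⟩
  have hGS : Set.range e ∪ A ⊆ AddSubmonoid.closure (Set.range e ∪ A) :=
    AddSubmonoid.subset_closure
  by_contra hnm
  obtain ⟨g, hg, h, hh, s, hs, rfl⟩ :=
    exists_add_add_eq_of_notMem_msg (Set.mem_iInter.mp hx (Classical.arbitrary ι)).1 hx0 hnm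
  have hgA : g ∈ A := by
    rcases hg with ⟨i, rfl⟩ | hgA
    · exact absurd (by abel) (hAp i (h + s) (add_mem (hGS hh) hs))
    · exact hgA
  have hhA : h ∈ A := by
    rcases hh with ⟨i, rfl⟩ | hhA
    · exact absurd (by abel) (hAp i (g + s) (add_mem (hGS hg) hs))
    · exact hhA
  obtain ⟨i, u, hu, hui⟩ := hA g hgA h hhA
  exact hAp i (u + s) (add_mem hu hs) (by rw [← add_assoc, hui])

lemma exists_add_eq_add_of_addClosed {M : Type*} [AddCommMonoid M] {S C : Set M} {n m m' : M}
    (hclosed : ∀ x ∈ {x ∈ C | x + n ∈ S}, ∀ y ∈ {x ∈ C | x + n ∈ S},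
      x + y ∈ {x ∈ C | x + n ∈ S})
    (hm : m ∈ S) (hm' : m' ∈ S) (hmC : ∃ c ∈ C, n + c = m) (hm'C : ∃ c ∈ C, n + c = m') :
    ∃ u ∈ S, n + u = m + m' := by
  obtain ⟨c, hc, rfl⟩ := hmC
  obtain ⟨c', hc', rfl⟩ := hm'C
  refine ⟨c + c' + n, (hclosed c ⟨hc, by rwa [add_comm]⟩ c' ⟨hc', by rwa [add_comm]⟩).2, ?_⟩
  abel

theorem statement19_general {p t : ℕ} (S : Set (Fin p → ℕ))
    (e : Fin t → (Fin p → ℕ)) (A : Set (Fin p → ℕ))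
    (hgen : S = (AddSubmonoid.closure (Set.range e ∪ A) : Set (Fin p → ℕ)))
    (k : Fin t)
    (hk : ∀ m ∈ A, ∃ c ∈ coneOf S, e k + c = m)
    (hclosed : ∀ x ∈ {x ∈ coneOf S | x + e k ∈ S},
      ∀ y ∈ {x ∈ coneOf S | x + e k ∈ S}, x + y ∈ {x ∈ coneOf S | x + e k ∈ S}) :
    ∀ x ∈ ⋂ i, Ap S (e i), x ≠ 0 → x ∈ msg S := by
  have : Nonempty (Fin t) := ⟨k⟩
  have hAS : A ⊆ S := hgen ▸ (Set.subset_union_right.trans AddSubmonoid.subset_closure)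
  refine mem_msg_of_mem_iInter_Ap S e A hgen fun m hm m' hm' => ⟨k, ?_⟩
  exact exists_add_eq_add_of_addClosed hclosed (hAS hm) (hAS hm') (hk m hm) (hk m' hm')

/-- If there is a fixed `k` such that `m - n k ∈ 𝒞_S` for every `m ∈ A`, and
`S k = {x ∈ 𝒞_S : x + n k ∈ S}` is closed under addition, then `S` is a
MED-semigroup: every non-zero element of `⋂ i, Ap(S, n i)` is a minimal
generator of `S`. -/
theorem statement19 {p t : ℕ} (S : Set (Fin p → ℕ))
    (τ : Fin t → Set (Fin p → ℕ)) (hτ : RaysOf (coneOf S) τ)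
    (e : Fin t → (Fin p → ℕ)) (A : Set (Fin p → ℕ))
    (hgen : S = (AddSubmonoid.closure (Set.range e ∪ A) : Set (Fin p → ℕ)))
    (hSaff : IsAffine S)
    (hmin : msg S = Set.range e ∪ A) (hdisj : Disjoint (Set.range e) A)
    (hmult : ∀ i, MultOn (τ i) S (e i)) (k : Fin t)
    (hk : ∀ m ∈ A, ∃ c ∈ coneOf S, e k + c = m)
    (hclosed : ∀ x ∈ {x ∈ coneOf S | x + e k ∈ S},
      ∀ y ∈ {x ∈ coneOf S | x + e k ∈ S}, x + y ∈ {x ∈ coneOf S | x + e k ∈ S}) :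
    ∀ x ∈ ⋂ i, Ap S (e i), x ≠ 0 → x ∈ msg S :=
  statement19_general S e A hgen k hk hclosed
end
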